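/- arXiv:1403.4489 — 2 statements merged into one kernel-verified Lean document; each statement's English description precedes it below -/
import Mathlib

section
/- If q is an odd prime power, then G_{q,θ} has exactly (q³ - 2q + 1)/2 = q³/2 - q + 1/2 edges. -/
/-!
`G_{q,θ}` is the Cayley sum graph of `A = A(q,θ)`, so a vertex `v` has degree `|A| - [2v ∈ A]` and
`2|E| = (q² - 1)|A| - #{v | 2v ∈ A}`. The discrete exponential `v ↦ θ^v` identifies `ℤ/(q²-1)`
with `F^*`; it carries `A` to `θ + F_q`, so `|A| = q`, and `{v | 2v ∈ A}` to `{y | y² ∈ θ + F_q}`.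
With `φ` the `q`-Frobenius, an involution of `F` fixing `F_q`, and `β = φθ - θ`, so that
`φβ = -β ≠ 0`, the latter condition reads `(φy - y)(φy + y) = β`. Since `2` is invertible,
`y ↦ φy - y` is a bijection onto the nonzero `u` with `φu = -u`, and `u ↦ u / β` maps these onto
`F_q^*`; hence `#{v | 2v ∈ A} = q - 1` and `2|E| = (q² - 1)q - (q - 1) = q³ - 2q + 1`.
-/

/-- The Bose-Chowla set: `a` with `θ^a - θ` in the subfield `F_q`
(characterized as fixed points of the `q`-power Frobenius). -/
def BoseChowla (q : ℕ) {F : Type*} [Field F] (θ : F) : Set (ZMod (q ^ 2 - 1)) :=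
  {a | (θ ^ a.val - θ) ^ q = θ ^ a.val - θ}

/-- The Cayley sum graph `G_{q,θ}`: `x ~ y` iff `x ≠ y` and `x + y ∈ A(q,θ)`. -/
def CayleyGraph (q : ℕ) {F : Type*} [Field F] (θ : F) : SimpleGraph (ZMod (q ^ 2 - 1)) :=
  SimpleGraph.fromRel (fun x y => x + y ∈ BoseChowla q θ)

/-- A graph is `C₄`-free: no four vertices form a 4-cycle. -/
def C4Free {V : Type*} (G : SimpleGraph V) : Prop :=
  ∀ a b c d : V, G.Adj a b → G.Adj b c → G.Adj c d → G.Adj d a → a = c ∨ b = d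

open Finset

section SumGraph

variable {G : Type*} [AddCommGroup G] (S : Set G)

theorem fromRel_add_mem_adj {x y : G} :
    (SimpleGraph.fromRel fun x y : G => x + y ∈ S).Adj x y ↔ x ≠ y ∧ x + y ∈ S := by
  simp [add_comm y x]

theorem degree_fromRel_add_mem [Fintype G] [DecidableEq G] [DecidablePred (· ∈ S)] (v : G)
    [Fintype ((SimpleGraph.fromRel fun x y : G => x + y ∈ S).neighborSet v)] :
    (SimpleGraph.fromRel fun x y : G => x + y ∈ S).degree v = #(S.toFinset.erase (v + v)) := by
  rw [← SimpleGraph.card_neighborFinset_eq_degree]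
  refine card_nbij' (v + ·) (· - v) ?_ ?_ (fun w _ => add_sub_cancel_left v w)
    (fun z _ => add_sub_cancel v z)
  · intro w hw
    simp only [SimpleGraph.coe_neighborFinset, SimpleGraph.mem_neighborSet,
      fromRel_add_mem_adj] at hw
    simp [hw.2, hw.1.symm]
  · intro z hz
    simp only [coe_erase, Set.coe_toFinset, Set.mem_sdiff, Set.mem_singleton_iff] at hz
    simp only [SimpleGraph.coe_neighborFinset, SimpleGraph.mem_neighborSet, fromRel_add_mem_adj,
      add_sub_cancel, hz.1, and_true]
    exact fun h => hz.2 (sub_eq_iff_eq_add.mp h.symm)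

theorem two_mul_ncard_edgeSet_fromRel_add_mem [Finite G] :
    2 * (SimpleGraph.fromRel fun x y : G => x + y ∈ S).edgeSet.ncard + {v : G | v + v ∈ S}.ncard =
      Nat.card G * S.ncard := by
  classical
  have := Fintype.ofFinite G
  have hdeg (v : G) : (SimpleGraph.fromRel fun x y : G => x + y ∈ S).degree v +
      (if v + v ∈ S then 1 else 0) = #S.toFinset := by
    rw [degree_fromRel_add_mem]
    by_cases h : v + v ∈ S
    · rw [if_pos h, card_erase_add_one (Set.mem_toFinset.2 h)]
    · simp [h]
  rw [← SimpleGraph.coe_edgeFinset, Set.ncard_coe_finset,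
    ← SimpleGraph.sum_degrees_eq_twice_card_edges, Set.ncard_eq_toFinset_card',
    Set.ncard_eq_toFinset_card', Nat.card_eq_fintype_card, ← card_univ, ← smul_eq_mul, ← sum_const,
    ← sum_congr rfl fun v _ => hdeg v, sum_add_distrib, sum_boole]
  simp

end SumGraph

theorem IsPrimitiveRoot.pow_val_add {M : Type*} [CommMonoid M] {ζ : M} {n : ℕ} [NeZero n]
    (hζ : IsPrimitiveRoot ζ n) (a b : ZMod n) : ζ ^ (a + b).val = ζ ^ a.val * ζ ^ b.val := by
  have := pow_mod_orderOf ζ (a.val + b.val)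
  rw [← hζ.eq_orderOf] at this
  rw [ZMod.val_add, this, pow_add]

section PrimitiveRoot

variable {R : Type*} [CommRing R] [IsDomain R] [Fintype R] {ζ : R} {n : ℕ}

theorem IsPrimitiveRoot.card_filter_pow_succ_eq_self [DecidableEq R] (hζ : IsPrimitiveRoot ζ n)
    (hn : 0 < n) : #{x : R | x ^ (n + 1) = x} = n + 1 := by
  have h : ({x : R | x ^ (n + 1) = x} : Finset R) =
      insert 0 (Polynomial.nthRootsFinset n (1 : R)) := by
    ext x
    by_cases hx : x = 0
    · simp [hx]
    · simp [hx, Polynomial.mem_nthRootsFinset hn, pow_succ, mul_eq_right₀ hx]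
  rw [h, card_insert_of_notMem (by simp [Polynomial.mem_nthRootsFinset hn, zero_pow hn.ne']),
    hζ.card_nthRootsFinset]

theorem IsPrimitiveRoot.card_filter_pow_val [NeZero n] (hζ : IsPrimitiveRoot ζ n) (P : R → Prop)
    [DecidablePred P] (hP : ∀ y, P y → y ^ n = 1) :
    #{v : ZMod n | P (ζ ^ v.val)} = #{y | P y} := by
  refine card_bij (fun v _ => ζ ^ v.val) (fun v hv => by simpa using hv) ?_ ?_
  · intro a _ b _ h
    exact ZMod.val_injective n (hζ.pow_inj (ZMod.val_lt a) (ZMod.val_lt b) h)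
  · intro y hy
    obtain ⟨i, hi, rfl⟩ := hζ.eq_pow_of_pow_eq_one (hP y (mem_filter.mp hy).2)
    exact ⟨i, by simpa [ZMod.val_cast_of_lt hi] using hy, by simp [ZMod.val_cast_of_lt hi]⟩

end PrimitiveRoot

section Involution

variable {F : Type*} [Field F] [Fintype F] [DecidableEq F] (φ : F →+* F) {β : F}

theorem card_filter_map_eq_neg (hβ : β ≠ 0) (hφβ : φ β = -β) :
    #{u | φ u = -u} = #{x | φ x = x} := by
  refine card_nbij' (· / β) (· * β) ?_ ?_ (fun u _ => div_mul_cancel₀ u hβ)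
    (fun x _ => mul_div_cancel_right₀ x hβ)
  · intro u hu
    simp only [coe_filter, mem_univ, true_and, Set.mem_ofPred_eq] at hu ⊢
    rw [map_div₀, hu, hφβ, neg_div_neg_eq]
  · intro x hx
    simp only [coe_filter, mem_univ, true_and, Set.mem_ofPred_eq] at hx ⊢
    rw [map_mul, hx, hφβ, mul_neg]

theorem card_filter_map_sq_sub_sq_add_one (hφ : ∀ x, φ (φ x) = x) (h2 : (2 : F) ≠ 0)
    (hβ : β ≠ 0) (hφβ : φ β = -β) :
    #{y | φ y ^ 2 - y ^ 2 = β} + 1 = #{u | φ u = -u} := by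
  rw [← card_erase_add_one (s := {u | φ u = -u}) (a := 0) (by simp)]
  congr 1
  have hφinv {u : F} (hu : φ u = -u) : φ ((β / u - u) / 2) = (β / u + u) / 2 := by
    rw [map_div₀, map_sub, map_div₀, hu, hφβ, map_ofNat, neg_div_neg_eq, sub_neg_eq_add]
  have hfactor (y : F) : φ y ^ 2 - y ^ 2 = (φ y - y) * (φ y + y) := by ring
  -- `y` is recovered from `φ y - y = u` and `φ y + y = β / u`
  refine card_nbij' (fun y => φ y - y) (fun u => (β / u - u) / 2) ?_ ?_ ?_ ?_
  · intro y hy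
    simp only [coe_filter, mem_univ, true_and, Set.mem_ofPred_eq, coe_erase, Set.mem_sdiff,
      Set.mem_singleton_iff, hfactor] at hy ⊢
    refine ⟨by rw [map_sub, hφ, neg_sub], fun h => hβ ?_⟩
    rw [← hy, h, zero_mul]
  · intro u hu
    simp only [coe_filter, mem_univ, true_and, Set.mem_ofPred_eq, coe_erase, Set.mem_sdiff,
      Set.mem_singleton_iff] at hu ⊢
    obtain ⟨hu, hu0⟩ := hu
    rw [hφinv hu]
    field_simp
    ring
  · intro y hy
    simp only [coe_filter, mem_univ, true_and, Set.mem_ofPred_eq, hfactor] at hy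
    have hd : φ y - y ≠ 0 := fun h => hβ (by rw [← hy, h, zero_mul])
    simp only
    rw [← hy, mul_div_cancel_left₀ _ hd]
    field_simp
    ring
  · intro u hu
    simp only [coe_filter, mem_univ, true_and, Set.mem_ofPred_eq, coe_erase, Set.mem_sdiff,
      Set.mem_singleton_iff] at hu
    obtain ⟨hu, hu0⟩ := hu
    simp only
    rw [hφinv hu]
    field_simp
    ring

end Involution

section Generator

variable {F : Type*} [Field F] {q : ℕ} {θ : F}

theorem pow_ne_self_of_orderOf_eq (hq : 1 < q) (hθ : orderOf θ = q ^ 2 - 1) : θ ^ q ≠ θ := by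
  have hθ0 : θ ≠ 0 := by
    rintro rfl
    rw [orderOf_eq_zero_iff'.mpr fun n hn => by simp [hn.ne']] at hθ
    have := Nat.one_lt_pow two_ne_zero hq
    omega
  have hlt : q - 1 < orderOf θ := by
    have : q < q ^ 2 := by nlinarith
    omega
  intro h
  rw [← Nat.sub_add_cancel hq.le, pow_succ, mul_eq_right₀ hθ0] at h
  exact pow_ne_one_of_lt_orderOf (by omega) hlt h

theorem card_filter_pow_eq_self_of_orderOf_eq [Fintype F] [DecidableEq F] (hq : 1 < q)
    (hθ : orderOf θ = q ^ 2 - 1) : #{x : F | x ^ q = x} = q := by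
  have hsq : q ^ 2 - 1 = (q + 1) * (q - 1) := by rw [← Nat.sq_sub_sq, one_pow]
  have hprim : IsPrimitiveRoot (θ ^ (q + 1)) (q - 1) :=
    (hθ ▸ IsPrimitiveRoot.orderOf θ).pow (by rw [hsq]; exact Nat.mul_pos q.succ_pos (by omega)) hsq
  have := hprim.card_filter_pow_succ_eq_self (by omega)
  rwa [Nat.sub_add_cancel hq.le] at this

end Generator

section CardSq

variable {F : Type*} [Field F] [Fintype F] {q : ℕ}

theorem exists_ringHom_eq_pow_of_card_eq_sq (hF : Fintype.card F = q ^ 2) :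
    ∃ φ : F →+* F, ∀ x, φ x = x ^ q := by
  obtain ⟨n, hp, hn⟩ := FiniteField.card F (ringChar F)
  obtain ⟨k, -, rfl⟩ := (Nat.dvd_prime_pow hp).mp (hn ▸ hF ▸ dvd_pow_self q two_ne_zero)
  have := ExpChar.prime (R := F) hp
  exact ⟨iterateFrobenius F (ringChar F) k, iterateFrobenius_def _ _⟩

theorem pow_pow_eq_self_of_card_eq_sq (hF : Fintype.card F = q ^ 2) (x : F) : (x ^ q) ^ q = x := by
  rw [← pow_mul, ← sq, ← hF, FiniteField.pow_card]

theorem one_lt_of_card_eq_sq (hF : Fintype.card F = q ^ 2) : 1 < q := by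
  have := hF ▸ Fintype.one_lt_card (α := F)
  by_contra! h
  interval_cases q <;> simp at this

theorem neZero_sq_sub_one_of_card_eq_sq (hF : Fintype.card F = q ^ 2) : NeZero (q ^ 2 - 1) :=
  ⟨by have := Nat.one_lt_pow two_ne_zero (one_lt_of_card_eq_sq hF); omega⟩

variable {θ : F}

theorem ne_zero_of_sub_pow_eq (hF : Fintype.card F = q ^ 2) (hθ : orderOf θ = q ^ 2 - 1) {y : F}
    (hy : (y - θ) ^ q = y - θ) : y ≠ 0 := by
  rintro rfl
  obtain ⟨φ, hφ⟩ := exists_ringHom_eq_pow_of_card_eq_sq hF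
  rw [← hφ, map_sub, map_zero, hφ, sub_right_inj] at hy
  exact pow_ne_self_of_orderOf_eq (one_lt_of_card_eq_sq hF) hθ hy

theorem card_filter_sub_pow_eq [DecidableEq F] (hF : Fintype.card F = q ^ 2)
    (hθ : orderOf θ = q ^ 2 - 1) : #{y : F | (y - θ) ^ q = y - θ} = q := by
  refine .trans ?_ (card_filter_pow_eq_self_of_orderOf_eq (one_lt_of_card_eq_sq hF) hθ)
  exact card_nbij' (· - θ) (· + θ) (fun y hy => by simpa using hy) (fun x hx => by simpa using hx)
    (fun y _ => sub_add_cancel y θ) (fun x _ => add_sub_cancel_right x θ)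

theorem card_filter_sq_sub_pow_eq_add_one [DecidableEq F] (hF : Fintype.card F = q ^ 2)
    (hodd : Odd q) (hθ : orderOf θ = q ^ 2 - 1) :
    #{y : F | (y ^ 2 - θ) ^ q = y ^ 2 - θ} + 1 = q := by
  obtain ⟨φ, hφ⟩ := exists_ringHom_eq_pow_of_card_eq_sq hF
  have hφφ (x : F) : φ (φ x) = x := by rw [hφ, hφ, pow_pow_eq_self_of_card_eq_sq hF]
  have h2 : (2 : F) ≠ 0 := Ring.two_ne_zero fun h => by
    have := FiniteField.even_card_iff_char_two.mp h
    rw [hF, Nat.odd_iff.mp (hodd.pow (n := 2))] at this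
    exact one_ne_zero this
  have hβ : φ θ - θ ≠ 0 :=
    sub_ne_zero.mpr (hφ θ ▸ pow_ne_self_of_orderOf_eq (one_lt_of_card_eq_sq hF) hθ)
  have hφβ : φ (φ θ - θ) = -(φ θ - θ) := by rw [map_sub, hφφ, neg_sub]
  have hfix : #{x : F | φ x = x} = q := by
    simp only [hφ]
    exact card_filter_pow_eq_self_of_orderOf_eq (one_lt_of_card_eq_sq hF) hθ
  calc #{y : F | (y ^ 2 - θ) ^ q = y ^ 2 - θ} + 1 = #{y | φ y ^ 2 - y ^ 2 = φ θ - θ} + 1 := by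
        simp only [← hφ, map_sub, map_pow, sub_eq_sub_iff_sub_eq_sub]
    _ = #{u | φ u = -u} := card_filter_map_sq_sub_sq_add_one φ hφφ h2 hβ hφβ
    _ = #{x | φ x = x} := card_filter_map_eq_neg φ hβ hφβ
    _ = q := hfix

end CardSq

namespace BoseChowla

variable {F : Type*} [Field F] [Fintype F] {q : ℕ} {θ : F}

theorem ncard_eq (hF : Fintype.card F = q ^ 2) (hθ : orderOf θ = q ^ 2 - 1) :
    (BoseChowla q θ).ncard = q := by
  classical
  have := neZero_sq_sub_one_of_card_eq_sq hF
  have hprim : IsPrimitiveRoot θ (q ^ 2 - 1) := hθ ▸ IsPrimitiveRoot.orderOf θ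
  rw [BoseChowla, Set.ncard_eq_toFinset_card', Set.toFinset_ofPred]
  refine (hprim.card_filter_pow_val (fun y => (y - θ) ^ q = y - θ) fun y hy => ?_).trans
    (card_filter_sub_pow_eq hF hθ)
  exact hF ▸ FiniteField.pow_card_sub_one_eq_one y (ne_zero_of_sub_pow_eq hF hθ hy)

theorem ncard_setOf_add_self_mem (hF : Fintype.card F = q ^ 2) (hodd : Odd q)
    (hθ : orderOf θ = q ^ 2 - 1) : {v | v + v ∈ BoseChowla q θ}.ncard = q - 1 := by
  classical
  have := neZero_sq_sub_one_of_card_eq_sq hF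
  have hprim : IsPrimitiveRoot θ (q ^ 2 - 1) := hθ ▸ IsPrimitiveRoot.orderOf θ
  have hmem (v : ZMod (q ^ 2 - 1)) :
      v + v ∈ BoseChowla q θ ↔ ((θ ^ v.val) ^ 2 - θ) ^ q = (θ ^ v.val) ^ 2 - θ := by
    rw [BoseChowla, Set.mem_ofPred_eq, hprim.pow_val_add, ← sq]
  rw [Set.ncard_eq_toFinset_card', Set.toFinset_ofPred, filter_congr fun v _ => hmem v]
  refine (hprim.card_filter_pow_val (fun y => (y ^ 2 - θ) ^ q = y ^ 2 - θ) fun y hy => ?_).trans ?_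
  · have hy0 := (pow_ne_zero_iff two_ne_zero).mp (ne_zero_of_sub_pow_eq hF hθ hy)
    exact hF ▸ FiniteField.pow_card_sub_one_eq_one y hy0
  · have := card_filter_sq_sub_pow_eq_add_one hF hodd hθ
    omega

end BoseChowla

theorem cayley_graph_edges_odd_general (q : ℕ) (hodd : Odd q) (F : Type*) [Field F]
    [Fintype F] (hF : Fintype.card F = q ^ 2) (θ : F) (hθ : orderOf θ = q ^ 2 - 1) :
    2 * (CayleyGraph q θ).edgeSet.ncard = q ^ 3 - 2 * q + 1 := by
  have := neZero_sq_sub_one_of_card_eq_sq hF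
  have hcount := two_mul_ncard_edgeSet_fromRel_add_mem (BoseChowla q θ)
  rw [BoseChowla.ncard_eq hF hθ, BoseChowla.ncard_setOf_add_self_mem hF hodd hθ, Nat.card_zmod]
    at hcount
  have hq := one_lt_of_card_eq_sq hF
  have h1 : 1 ≤ q ^ 2 := Nat.one_le_pow _ _ (by omega)
  have h2 : 2 * q ≤ q ^ 3 := by nlinarith
  unfold CayleyGraph
  zify [h1, h2, hq.le] at hcount ⊢
  linear_combination hcount

theorem cayley_graph_edges_odd (q : ℕ) (hq : IsPrimePow q) (hodd : Odd q) (F : Type*) [Field F]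
    [Fintype F] (hF : Fintype.card F = q ^ 2) (θ : F) (hθ : orderOf θ = q ^ 2 - 1) :
    2 * (CayleyGraph q θ).edgeSet.ncard = q ^ 3 - 2 * q + 1 :=
  cayley_graph_edges_odd_general q hodd F hF θ hθ
end

section
/- In G_{q,θ}, two distinct vertices x and y are at distance 2 if and only if x + y ∉ A(q,θ) and x - y ∉ H, and at distance 3 if and only if x + y ∉ A(q,θ) and x - y ∈ H, where H is the subgroup of ℤ/(q²-1) generated by q+1. -/
/-!
Let `σ x = x ^ q` be the Frobenius of `F` over its subfield `K` of order `q`. Then `a ∈ A` means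
`θ ^ a ∈ θ + K`, and `d ∈ H` means `θ ^ d ∈ K`. If `a, b ∈ A` and `a - b ∈ H`, then
`θ + c = u * (θ + c')` with `c, c', u ∈ K`; applying `σ` and subtracting gives
`(u - 1) * (σ θ - θ) = 0`, so `u = 1` and `a = b`. Hence a path `x ~ z ~ y` forces
`x - y = (x + z) - (z + y) ∉ H`. Conversely, for `m = θ ^ d ∉ K` the same two equations can be
solved for `c, c' ∈ K`, so every `d ∉ H` is a difference `a - b` of elements of `A`, and `a - x` is
then a common neighbour of `x` and `y`. When `x - y ∈ H`, pick `a ∈ A` outside `x + y + H` with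
`a ≠ 2 x`, possible because `A` meets each coset of `H` at most once and has at least three
elements (for `q = 2` the subgroup `H` is trivial, so this case does not arise); then `a - x` is a
neighbour of `x` at distance `2` from `y`.
-/

open SimpleGraph

theorem ZMod.mem_zmultiples_natCast_iff_dvd_val {m n : ℕ} [NeZero n] (hmn : m ∣ n)
    {d : ZMod n} : d ∈ AddSubgroup.zmultiples (m : ZMod n) ↔ m ∣ d.val := by
  rw [AddSubgroup.mem_zmultiples_iff]
  constructor
  · rintro ⟨k, rfl⟩
    rw [zsmul_eq_mul, ZMod.val_mul, Nat.dvd_mod_iff hmn, ZMod.val_natCast]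
    exact ((Nat.dvd_mod_iff hmn).2 dvd_rfl).mul_left _
  · rintro ⟨j, hj⟩
    refine ⟨j, ?_⟩
    rw [← ZMod.natCast_zmod_val d, hj, zsmul_eq_mul]
    push_cast
    ring

namespace IsPrimitiveRoot

section CommMonoid

variable {M : Type*} [CommMonoid M] {ζ : M} {n : ℕ} [NeZero n]

theorem pow_val_add_s15 (h : IsPrimitiveRoot ζ n) (a b : ZMod n) :
    ζ ^ (a + b).val = ζ ^ a.val * ζ ^ b.val := by
  rw [ZMod.val_add, ← pow_add, ← pow_mod_orderOf ζ (a.val + b.val), ← h.eq_orderOf]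

theorem pow_val_injective (h : IsPrimitiveRoot ζ n) :
    Function.Injective fun a : ZMod n => ζ ^ a.val :=
  fun a b hab => ZMod.val_injective n (h.pow_inj a.val_lt b.val_lt hab)

end CommMonoid

theorem exists_pow_val_eq {R : Type*} [CommRing R] [IsDomain R] {ζ ξ : R} {n : ℕ} [NeZero n]
    (h : IsPrimitiveRoot ζ n) (hξ : ξ ^ n = 1) : ∃ a : ZMod n, ζ ^ a.val = ξ := by
  obtain ⟨i, hi, rfl⟩ := h.eq_pow_of_pow_eq_one hξ
  exact ⟨i, by rw [ZMod.val_natCast_of_lt hi]⟩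

end IsPrimitiveRoot

section FixedPoints

variable {F : Type*} [Field F] {σ : F →+* F} {θ c c' u m : F}

theorem add_ne_zero_of_map_eq (hθ : σ θ ≠ θ) (hc : σ c = c) : θ + c ≠ 0 := fun h =>
  hθ (by rw [eq_neg_of_add_eq_zero_left h, map_neg, hc])

theorem eq_one_of_add_eq_mul_add (hθ : σ θ ≠ θ) (hc : σ c = c) (hc' : σ c' = c')
    (hu : σ u = u) (h : θ + c = u * (θ + c')) : u = 1 := by
  have hσh : σ θ + c = u * (σ θ + c') := by simpa [hc, hc', hu] using congrArg σ h
  have : (u - 1) * (σ θ - θ) = 0 := by linear_combination h - hσh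
  exact sub_eq_zero.1 ((mul_eq_zero.1 this).resolve_right (sub_ne_zero.2 hθ))

theorem exists_add_eq_mul_add (hσ : ∀ x, σ (σ x) = x) (hm : σ m ≠ m) (θ : F) :
    ∃ c c', σ c = c ∧ σ c' = c' ∧ θ + c = m * (θ + c') := by
  have hden : σ m - m ≠ 0 := sub_ne_zero.2 hm
  -- subtracting `θ + c = m * (θ + c')` from its image under `σ` leaves a linear equation in `c'`
  set c' := (θ * (m - 1) - σ θ * (σ m - 1)) / (σ m - m) with hc'_def
  have hc' : σ c' = c' := by
    rw [hc'_def, map_div₀]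
    simp only [map_sub, map_mul, map_one, hσ]
    rw [div_eq_div_iff (sub_ne_zero.2 (Ne.symm hm)) hden]
    ring
  have key : c' * (σ m - m) = θ * (m - 1) - σ θ * (σ m - 1) := div_mul_cancel₀ _ hden
  refine ⟨m * (θ + c') - θ, c', ?_, hc', by ring⟩
  simp only [map_sub, map_mul, map_add, hc']
  linear_combination key

end FixedPoints

theorem exists_ringHom_eq_pow {F : Type*} [Field F] [Fintype F] {q : ℕ} (hq : IsPrimePow q)
    (hqF : q ∣ Fintype.card F) : ∃ σ : F →+* F, ∀ x, σ x = x ^ q := by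
  obtain ⟨p, n, hp, hn, rfl⟩ := hq
  obtain ⟨p', hchar, k, hp', hcard⟩ := FiniteField.card' F
  have hpp' : p = p' := (Nat.prime_dvd_prime_iff_eq hp.nat_prime hp').1 <|
    hp.nat_prime.dvd_of_dvd_pow <| hcard ▸ (dvd_pow_self p hn.ne').trans hqF
  subst hpp'
  have := Fact.mk hp'
  exact ⟨iterateFrobenius F p n, fun _ => rfl⟩

theorem SimpleGraph.dist_eq_two_iff {V : Type*} {G : SimpleGraph V} {u v : V} :
    G.dist u v = 2 ↔ u ≠ v ∧ ¬G.Adj u v ∧ (G.commonNeighbors u v).Nonempty := by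
  rw [SimpleGraph.dist, ENat.toNat_eq_iff two_ne_zero]
  exact edist_eq_two_iff

section BoseChowla

variable {q : ℕ} {F : Type*} [Field F] {θ : F} {σ : F →+* F}

theorem mem_boseChowla_iff (hσ : ∀ x, σ x = x ^ q) {a : ZMod (q ^ 2 - 1)} :
    a ∈ BoseChowla q θ ↔ σ (θ ^ a.val - θ) = θ ^ a.val - θ := by
  rw [hσ]
  rfl

theorem sq_sub_one_eq_mul : q ^ 2 - 1 = (q + 1) * (q - 1) := by
  simpa using Nat.sq_sub_sq q 1

theorem two_le_of_neZero [NeZero (q ^ 2 - 1)] : 2 ≤ q := by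
  have := NeZero.ne (q ^ 2 - 1)
  by_contra! hq
  interval_cases q <;> simp at this

theorem mem_zmultiples_iff_dvd_val [NeZero (q ^ 2 - 1)] {d : ZMod (q ^ 2 - 1)} :
    d ∈ AddSubgroup.zmultiples ((q : ZMod (q ^ 2 - 1)) + 1) ↔ q + 1 ∣ d.val := by
  rw [← ZMod.mem_zmultiples_natCast_iff_dvd_val ⟨q - 1, sq_sub_one_eq_mul⟩]
  push_cast
  rfl

theorem three_le_of_mem_zmultiples [NeZero (q ^ 2 - 1)] {d : ZMod (q ^ 2 - 1)}
    (hd : d ∈ AddSubgroup.zmultiples ((q : ZMod (q ^ 2 - 1)) + 1)) (hd0 : d ≠ 0) : 3 ≤ q := by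
  obtain ⟨k, hk⟩ := mem_zmultiples_iff_dvd_val.1 hd
  have hlt := d.val_lt
  have hpos := (ZMod.val_ne_zero d).2 hd0
  by_contra! hq
  obtain rfl : q = 2 := le_antisymm (by omega) two_le_of_neZero
  omega

theorem map_ne_self_of_isPrimitiveRoot [NeZero (q ^ 2 - 1)] (hσ : ∀ x, σ x = x ^ q)
    (hθ : IsPrimitiveRoot θ (q ^ 2 - 1)) : σ θ ≠ θ := by
  have hq : 2 ≤ q := two_le_of_neZero
  have hq' : q < q ^ 2 - 1 := by nlinarith [Nat.sub_add_cancel (Nat.one_le_pow 2 q (by omega))]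
  rw [hσ]
  intro h
  have := hθ.pow_inj hq' (by omega) (h.trans (pow_one θ).symm)
  omega

theorem mem_zmultiples_iff_map_pow_val_eq [NeZero (q ^ 2 - 1)] (hσ : ∀ x, σ x = x ^ q)
    (hθ : IsPrimitiveRoot θ (q ^ 2 - 1)) {d : ZMod (q ^ 2 - 1)} :
    d ∈ AddSubgroup.zmultiples ((q : ZMod (q ^ 2 - 1)) + 1) ↔ σ (θ ^ d.val) = θ ^ d.val := by
  have hq : 2 ≤ q := two_le_of_neZero
  have hθ0 : θ ≠ 0 := hθ.ne_zero (NeZero.ne _)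
  have hsplit : d.val * q = d.val * (q - 1) + d.val := by
    rw [← Nat.mul_succ]
    congr 1
    omega
  rw [mem_zmultiples_iff_dvd_val, hσ, ← pow_mul, hsplit, pow_add,
    mul_eq_right₀ (pow_ne_zero _ hθ0), hθ.pow_eq_one_iff_dvd]
  generalize d.val = v
  rw [sq_sub_one_eq_mul, Nat.mul_dvd_mul_iff_right (by omega)]

theorem BoseChowla.eq_of_sub_mem [NeZero (q ^ 2 - 1)] (hσ : ∀ x, σ x = x ^ q)
    (hθ : IsPrimitiveRoot θ (q ^ 2 - 1)) {a b : ZMod (q ^ 2 - 1)} (ha : a ∈ BoseChowla q θ)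
    (hb : b ∈ BoseChowla q θ)
    (hab : a - b ∈ AddSubgroup.zmultiples ((q : ZMod (q ^ 2 - 1)) + 1)) : a = b := by
  have hrel : θ + (θ ^ a.val - θ) = θ ^ (a - b).val * (θ + (θ ^ b.val - θ)) := by
    rw [add_sub_cancel, add_sub_cancel, ← hθ.pow_val_add_s15, sub_add_cancel]
  have hu := eq_one_of_add_eq_mul_add (map_ne_self_of_isPrimitiveRoot hσ hθ)
    ((mem_boseChowla_iff hσ).1 ha) ((mem_boseChowla_iff hσ).1 hb)
    ((mem_zmultiples_iff_map_pow_val_eq hσ hθ).1 hab) hrel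
  rw [← sub_eq_zero]
  exact hθ.pow_val_injective (by simpa using hu)

variable [Fintype F]

theorem exists_mem_boseChowla_pow_val_eq_add (hF : Fintype.card F = q ^ 2)
    [NeZero (q ^ 2 - 1)] (hσ : ∀ x, σ x = x ^ q) (hθ : IsPrimitiveRoot θ (q ^ 2 - 1)) {c : F}
    (hc : σ c = c) : ∃ a ∈ BoseChowla q θ, θ ^ a.val = θ + c := by
  have hθc := add_ne_zero_of_map_eq (map_ne_self_of_isPrimitiveRoot hσ hθ) hc
  obtain ⟨a, ha⟩ := hθ.exists_pow_val_eq (ξ := θ + c)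
    (by rw [← hF]; exact FiniteField.pow_card_sub_one_eq_one _ hθc)
  exact ⟨a, by rw [mem_boseChowla_iff hσ, ha, add_sub_cancel_left, hc], ha⟩

theorem map_map_eq_self_of_card (hF : Fintype.card F = q ^ 2) (hσ : ∀ x, σ x = x ^ q) (x : F) :
    σ (σ x) = x := by
  rw [hσ, hσ, ← pow_mul, ← sq, ← hF, FiniteField.pow_card]

theorem BoseChowla.exists_sub_eq (hF : Fintype.card F = q ^ 2) [NeZero (q ^ 2 - 1)]
    (hσ : ∀ x, σ x = x ^ q) (hθ : IsPrimitiveRoot θ (q ^ 2 - 1)) {d : ZMod (q ^ 2 - 1)}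
    (hd : d ∉ AddSubgroup.zmultiples ((q : ZMod (q ^ 2 - 1)) + 1)) :
    ∃ a ∈ BoseChowla q θ, ∃ b ∈ BoseChowla q θ, a - b = d := by
  have hm : σ (θ ^ d.val) ≠ θ ^ d.val := fun h =>
    hd ((mem_zmultiples_iff_map_pow_val_eq hσ hθ).2 h)
  obtain ⟨c, c', hc, hc', hcc'⟩ := exists_add_eq_mul_add (map_map_eq_self_of_card hF hσ) hm θ
  obtain ⟨a, ha, hac⟩ := exists_mem_boseChowla_pow_val_eq_add hF hσ hθ hc
  obtain ⟨b, hb, hbc'⟩ := exists_mem_boseChowla_pow_val_eq_add hF hσ hθ hc'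
  refine ⟨a, ha, b, hb, sub_eq_iff_eq_add.2 (hθ.pow_val_injective ?_)⟩
  simp only [hθ.pow_val_add_s15, hac, hbc', hcc']

theorem two_lt_encard_boseChowla (hF : Fintype.card F = q ^ 2) [NeZero (q ^ 2 - 1)]
    (hσ : ∀ x, σ x = x ^ q) (hθ : IsPrimitiveRoot θ (q ^ 2 - 1)) (hq : 3 ≤ q) :
    2 < (BoseChowla q θ).encard := by
  have hθ0 : θ ≠ 0 := hθ.ne_zero (NeZero.ne _)
  have hnorm : θ * σ θ = θ ^ (q + 1) := by rw [hσ, pow_succ']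
  have hnorm_ne_one : θ * σ θ ≠ 1 := by
    rw [hnorm, ← pow_zero θ]
    intro h
    have hq' : q + 1 < q ^ 2 - 1 := by
      nlinarith [Nat.sub_add_cancel (Nat.one_le_pow 2 q (by omega))]
    exact absurd (hθ.pow_inj hq' (by omega) h) (by omega)
  have hnorm_ne_zero : θ * σ θ ≠ 0 := mul_ne_zero hθ0 ((map_ne_zero σ).2 hθ0)
  have hfixed : ({0, 1, θ * σ θ} : Set F) ⊆ (fun a => θ ^ a.val - θ) '' BoseChowla q θ := by
    intro c hc
    have hσc : σ c = c := by
      rcases hc with rfl | rfl | rfl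
      · exact map_zero σ
      · exact map_one σ
      · rw [map_mul, map_map_eq_self_of_card hF hσ, mul_comm]
    obtain ⟨a, ha, hac⟩ := exists_mem_boseChowla_pow_val_eq_add hF hσ hθ hσc
    exact ⟨a, ha, by simp [hac]⟩
  calc (2 : ℕ∞) < 3 := by norm_num
    _ = ({0, 1, θ * σ θ} : Set F).encard :=
      (Set.encard_eq_three.2
        ⟨0, 1, _, zero_ne_one, hnorm_ne_zero.symm, hnorm_ne_one.symm, rfl⟩).symm
    _ ≤ _ := Set.encard_le_encard hfixed
    _ ≤ _ := Set.encard_image_le _ _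

end BoseChowla

section CayleySumGraph

variable {G : Type*} [AddCommGroup G]

def cayleySumGraph (A : Set G) : SimpleGraph G :=
  SimpleGraph.fromRel fun x y => x + y ∈ A

variable {A : Set G} {H : AddSubgroup G} {x y : G}

theorem cayleySumGraph_adj : (cayleySumGraph A).Adj x y ↔ x ≠ y ∧ x + y ∈ A := by
  simp [cayleySumGraph, add_comm y x]

theorem cayleySumGraph_commonNeighbors_nonempty (hs : x + y ∉ A) {a b : G} (ha : a ∈ A)
    (hb : b ∈ A) (hab : a - b = x - y) : ((cayleySumGraph A).commonNeighbors x y).Nonempty := by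
  have hb' : y + (a - x) = b := by rw [← sub_eq_zero, ← sub_eq_zero.2 hab]; abel
  refine ⟨a - x, (mem_commonNeighbors _).2 ⟨cayleySumGraph_adj.2 ⟨fun h => hs ?_, ?_⟩,
    cayleySumGraph_adj.2 ⟨fun h => hs ?_, hb' ▸ hb⟩⟩⟩
  · rwa [h, add_comm, hb']
  · rwa [add_sub_cancel]
  · rwa [h, add_sub_cancel]

theorem cayleySumGraph_commonNeighbors_eq_empty (hA : ∀ a ∈ A, ∀ b ∈ A, a - b ∈ H → a = b)
    (hxy : x ≠ y) (hd : x - y ∈ H) : (cayleySumGraph A).commonNeighbors x y = ∅ := by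
  refine Set.eq_empty_of_forall_notMem fun z hz => hxy ?_
  obtain ⟨hxz, hyz⟩ := (mem_commonNeighbors _).1 hz
  exact add_right_cancel (hA _ (cayleySumGraph_adj.1 hxz).2 _ (cayleySumGraph_adj.1 hyz).2
    (by rwa [add_sub_add_right_eq_sub]))

theorem cayleySumGraph_dist_eq_two_iff (hA : ∀ a ∈ A, ∀ b ∈ A, a - b ∈ H → a = b)
    (hA' : ∀ d ∉ H, ∃ a ∈ A, ∃ b ∈ A, a - b = d) (hxy : x ≠ y) :
    (cayleySumGraph A).dist x y = 2 ↔ x + y ∉ A ∧ x - y ∉ H := by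
  rw [dist_eq_two_iff, cayleySumGraph_adj]
  constructor
  · rintro ⟨-, hs, hN⟩
    refine ⟨fun h => hs ⟨hxy, h⟩, fun hd => ?_⟩
    rw [cayleySumGraph_commonNeighbors_eq_empty hA hxy hd] at hN
    exact Set.not_nonempty_empty hN
  · rintro ⟨hs, hd⟩
    obtain ⟨a, ha, b, hb, hab⟩ := hA' _ hd
    exact ⟨hxy, fun h => hs h.2, cayleySumGraph_commonNeighbors_nonempty hs ha hb hab⟩

theorem exists_mem_sub_notMem_and_ne (hA : ∀ a ∈ A, ∀ b ∈ A, a - b ∈ H → a = b)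
    (hA3 : 2 < A.encard) (s t : G) : ∃ a ∈ A, a - s ∉ H ∧ a ≠ t := by
  by_contra! h
  have hcover : A ⊆ {a ∈ A | a - s ∈ H} ∪ {t} := fun a ha =>
    (em (a - s ∈ H)).imp (fun has => ⟨ha, has⟩) (h a ha)
  have hcoset : {a ∈ A | a - s ∈ H}.encard ≤ 1 := Set.encard_le_one_iff.2 fun a b ha hb =>
    hA a ha.1 b hb.1 (by simpa using H.sub_mem ha.2 hb.2)
  have hle : A.encard ≤ 1 + 1 := by
    grw [hcover, Set.encard_union_le, Set.encard_singleton, hcoset]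
  exact (hA3.trans_le (hle.trans_eq one_add_one_eq_two)).false

theorem cayleySumGraph_dist_eq_three (hA : ∀ a ∈ A, ∀ b ∈ A, a - b ∈ H → a = b)
    (hA' : ∀ d ∉ H, ∃ a ∈ A, ∃ b ∈ A, a - b = d) (hA3 : 2 < A.encard) (hxy : x ≠ y)
    (hs : x + y ∉ A) (hd : x - y ∈ H) : (cayleySumGraph A).dist x y = 3 := by
  obtain ⟨a, ha, haH, hax⟩ := exists_mem_sub_notMem_and_ne hA hA3 (x + y) (x + x)
  have hadj : (cayleySumGraph A).Adj x (a - x) :=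
    cayleySumGraph_adj.2 ⟨fun h => hax (sub_eq_iff_eq_add.1 h.symm), by rwa [add_sub_cancel]⟩
  have hzy : (cayleySumGraph A).dist (a - x) y = 2 := by
    refine (cayleySumGraph_dist_eq_two_iff hA hA' fun h => hs ?_).2 ⟨fun hb => hxy ?_, ?_⟩
    · rwa [← h, add_sub_cancel]
    · have := hA a ha _ hb (by rwa [show a - (a - x + y) = x - y by abel])
      rw [← sub_eq_zero, ← sub_eq_zero.2 this]
      abel
    · rwa [sub_sub]
  obtain ⟨p, hp⟩ := exists_walk_of_dist_ne_zero (hzy.symm ▸ two_ne_zero)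
  have hle : (cayleySumGraph A).dist x y ≤ 3 :=
    (dist_le (.cons hadj p)).trans (by simp [hp, hzy])
  have h0 : (cayleySumGraph A).dist x y ≠ 0 :=
    dist_ne_zero_iff_ne_and_reachable.2 ⟨hxy, (Walk.cons hadj p).reachable⟩
  have h1 : (cayleySumGraph A).dist x y ≠ 1 := fun h =>
    hs (cayleySumGraph_adj.1 (dist_eq_one_iff_adj.1 h)).2
  have h2 : (cayleySumGraph A).dist x y ≠ 2 := fun h =>
    ((cayleySumGraph_dist_eq_two_iff hA hA' hxy).1 h).2 hd
  omega

end CayleySumGraph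

theorem cayley_graph_distances (q : ℕ) (hq : IsPrimePow q) (F : Type*) [Field F]
    [Fintype F] (hF : Fintype.card F = q ^ 2) (θ : F) (hθ : orderOf θ = q ^ 2 - 1) :
    ∀ x y : ZMod (q ^ 2 - 1), x ≠ y →
      ((CayleyGraph q θ).dist x y = 2 ↔
        x + y ∉ BoseChowla q θ ∧
          x - y ∉ AddSubgroup.zmultiples ((q : ZMod (q ^ 2 - 1)) + 1)) ∧
      ((CayleyGraph q θ).dist x y = 3 ↔
        x + y ∉ BoseChowla q θ ∧
          x - y ∈ AddSubgroup.zmultiples ((q : ZMod (q ^ 2 - 1)) + 1)) := by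
  have : NeZero (q ^ 2 - 1) :=
    ⟨Nat.sub_ne_zero_of_lt (Nat.one_lt_pow two_ne_zero hq.one_lt)⟩
  have hprim : IsPrimitiveRoot θ (q ^ 2 - 1) := hθ ▸ IsPrimitiveRoot.orderOf θ
  obtain ⟨σ, hσ⟩ := exists_ringHom_eq_pow hq (hF ▸ dvd_pow_self q two_ne_zero)
  have hA := fun a ha b hb => BoseChowla.eq_of_sub_mem (a := a) (b := b) hσ hprim ha hb
  have hA' := fun d => BoseChowla.exists_sub_eq (d := d) hF hσ hprim
  intro x y hxy
  rw [show CayleyGraph q θ = cayleySumGraph (BoseChowla q θ) from rfl]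
  have two := cayleySumGraph_dist_eq_two_iff hA hA' hxy
  refine ⟨two, fun h3 => ?_, fun ⟨hs, hd⟩ => ?_⟩
  · have hs : x + y ∉ BoseChowla q θ := fun hs => by
      rw [dist_eq_one_iff_adj.2 (cayleySumGraph_adj.2 ⟨hxy, hs⟩)] at h3
      omega
    exact ⟨hs, not_not.1 fun hd => by rw [two.2 ⟨hs, hd⟩] at h3; omega⟩
  · exact cayleySumGraph_dist_eq_three hA hA' (two_lt_encard_boseChowla hF hσ hprim
      (three_le_of_mem_zmultiples hd (sub_ne_zero.2 hxy))) hxy hs hd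
end
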